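/- arXiv:2306.09554 — 3 statements merged into one kernel-verified Lean document; each statement's English description precedes it below -/
import Mathlib

section
/- Let A be a finite nonempty set, and let π, π' be probability mass functions on A with π'(a) = π(a)·exp(η·g(a)) / ∑_{a''} π(a'') exp(η·g(a'')), where |g| ≤ 4W and η·4W ≤ 1 and ∑_a π(a) g(a) = 0. Then for any probability mass function p on A, KL(p, π') − KL(p, π) ≤ −η·∑_a p(a) g(a) + 16 η² W². -/
/-- Kullback–Leibler divergence between two pmfs on a finite type. -/
noncomputable def KLdiv {A : Type*} [Fintype A] (p q : A → ℝ) : ℝ :=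
  ∑ a, p a * Real.log (p a / q a)

lemma exp_le_one_add_add_sq {x : ℝ} (hx : |x| ≤ 1) : Real.exp x ≤ 1 + x + x ^ 2 := by
  have h := Real.exp_bound hx (by norm_num : 0 < 2)
  simp [Finset.sum_range_succ] at h
  have h' := (abs_le.mp h).2
  nlinarith [sq_abs x, abs_nonneg x]

theorem npg_descent_step
    {A : Type*} [Fintype A] [Nonempty A]
    (W η : ℝ) (hW : 0 < W) (hη : 0 < η)
    (π π' p : A → ℝ) (g : A → ℝ)
    (hπpos : ∀ a, 0 < π a) (hπ1 : ∑ a, π a = 1)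
    (hppos : ∀ a, 0 < p a) (hp1 : ∑ a, p a = 1)
    (hg : ∀ a, |g a| ≤ 4 * W)
    (hηW : η * (4 * W) ≤ 1)
    (hmean : ∑ a, π a * g a = 0)
    (hπ' : ∀ a, π' a = π a * Real.exp (η * g a) /
      ∑ a'', π a'' * Real.exp (η * g a'')) :
    KLdiv p π' - KLdiv p π ≤ -η * (∑ a, p a * g a) + 16 * η ^ 2 * W ^ 2 := by
  set Z : ℝ := ∑ a'', π a'' * Real.exp (η * g a'') with hZdef
  have hZpos : 0 < Z :=
    Finset.sum_pos (fun a _ => mul_pos (hπpos a) (Real.exp_pos _)) Finset.univ_nonempty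
  have key : KLdiv p π' - KLdiv p π = -η * (∑ a, p a * g a) + Real.log Z := by
    unfold KLdiv
    rw [← Finset.sum_sub_distrib]
    have hterm : ∀ a : A, p a * Real.log (p a / π' a) - p a * Real.log (p a / π a)
        = -η * (p a * g a) + p a * Real.log Z := by
      intro a
      have h1 : Real.log (p a / π' a) = Real.log (p a) - Real.log (π' a) :=
        Real.log_div (hppos a).ne'
          (by rw [hπ']; exact (div_pos (mul_pos (hπpos a) (Real.exp_pos _)) hZpos).ne')
      have h2 : Real.log (p a / π a) = Real.log (p a) - Real.log (π a) :=
        Real.log_div (hppos a).ne' (hπpos a).ne'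
      have h3 : Real.log (π' a) = Real.log (π a) + η * g a - Real.log Z := by
        rw [hπ', Real.log_div (mul_pos (hπpos a) (Real.exp_pos _)).ne' hZpos.ne',
          Real.log_mul (hπpos a).ne' (Real.exp_pos _).ne', Real.log_exp]
      rw [h1, h2, h3]; ring
    rw [Finset.sum_congr rfl (fun a _ => hterm a), Finset.sum_add_distrib,
      ← Finset.sum_mul, hp1, ← Finset.mul_sum]
    ring
  rw [key]
  have hlog : Real.log Z ≤ Z - 1 := Real.log_le_sub_one_of_pos hZpos
  have hx : ∀ a, |η * g a| ≤ 1 := by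
    intro a
    rw [abs_mul, abs_of_pos hη]
    calc η * |g a| ≤ η * (4 * W) := by nlinarith [hg a]
      _ ≤ 1 := hηW
  have hZle : Z ≤ 1 + 16 * η ^ 2 * W ^ 2 := by
    have h1 : Z ≤ ∑ a, π a * (1 + η * g a + (η * g a) ^ 2) :=
      Finset.sum_le_sum fun a _ =>
        mul_le_mul_of_nonneg_left (exp_le_one_add_add_sq (hx a)) (hπpos a).le
    have h2 : ∑ a, π a * (1 + η * g a + (η * g a) ^ 2)
        = 1 + η ^ 2 * ∑ a, π a * g a ^ 2 := by
      have : ∀ a : A, π a * (1 + η * g a + (η * g a) ^ 2)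
          = π a + η * (π a * g a) + η ^ 2 * (π a * g a ^ 2) := by intro a; ring
      rw [Finset.sum_congr rfl (fun a _ => this a), Finset.sum_add_distrib,
        Finset.sum_add_distrib, ← Finset.mul_sum, ← Finset.mul_sum, hπ1, hmean]
      ring
    have h3 : ∑ a, π a * g a ^ 2 ≤ 16 * W ^ 2 := by
      calc ∑ a, π a * g a ^ 2 ≤ ∑ a, π a * (16 * W ^ 2) := by
            refine Finset.sum_le_sum fun a _ => mul_le_mul_of_nonneg_left ?_ (hπpos a).le
            have := hg a
            nlinarith [sq_abs (g a), abs_nonneg (g a)]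
        _ = 16 * W ^ 2 := by rw [← Finset.sum_mul, hπ1, one_mul]
    nlinarith [sq_nonneg η]
  linarith
end

section
/- Let A be a finite set of cardinality |A| ≥ 2, W > 0, K ≥ 1 an integer with K > log|A|, and set η = √(log|A| / (16 W² K)). Suppose p, π_0, …, π_K are probability mass functions on A with π_0 the uniform distribution, and for each k < K, KL(p, π_{k+1}) − KL(p, π_k) ≤ −η·G_k + 16 η² W², where G_k ∈ ℝ. Then ∑_{k=0}^{K−1} G_k ≤ log(|A|)/η + 16 η K W² = 8 W √(log(|A|)·K). -/
theorem npg_regret_telescoping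
    {A : Type*} [Fintype A] (hA : 2 ≤ Fintype.card A)
    (W : ℝ) (hW : 0 < W)
    (K : ℕ) (hK1 : 1 ≤ K) (hK : Real.log (Fintype.card A) < K)
    (η : ℝ) (hη : η = Real.sqrt (Real.log (Fintype.card A) / (16 * W ^ 2 * K)))
    (p : A → ℝ) (π : ℕ → A → ℝ) (G : ℕ → ℝ)
    (hp0 : ∀ a, 0 ≤ p a) (hp1 : ∑ a, p a = 1)
    (hπpmf : ∀ k ≤ K, (∀ a, 0 ≤ π k a) ∧ ∑ a, π k a = 1)
    (hπ0 : ∀ a, π 0 a = 1 / Fintype.card A)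
    (hrec : ∀ k < K,
      KLdiv p (π (k + 1)) - KLdiv p (π k) ≤ -η * G k + 16 * η ^ 2 * W ^ 2) :
    (∑ k ∈ Finset.range K, G k ≤
        Real.log (Fintype.card A) / η + 16 * η * K * W ^ 2) ∧
    Real.log (Fintype.card A) / η + 16 * η * K * W ^ 2 =
      8 * W * Real.sqrt (Real.log (Fintype.card A) * K) := by
  have hc2 : (2:ℝ) ≤ (Fintype.card A : ℝ) := by exact_mod_cast hA
  have hcpos : (0:ℝ) < (Fintype.card A : ℝ) := by linarith
  set L := Real.log (Fintype.card A) with hLdef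
  have hL : 0 < L := Real.log_pos (by linarith)
  have hK0 : 0 < (K:ℝ) := by exact_mod_cast hK1
  have hargnn : 0 ≤ L / (16 * W ^ 2 * K) := by positivity
  have hη0 : 0 < η := by rw [hη]; apply Real.sqrt_pos.2; positivity
  have hη2 : η ^ 2 = L / (16 * W ^ 2 * K) := by rw [hη, Real.sq_sqrt hargnn]
  have hple : ∀ a, p a ≤ 1 := by
    intro a
    rw [← hp1]
    exact Finset.single_le_sum (fun b _ => hp0 b) (Finset.mem_univ a)
  have hplogp : ∀ a, p a * Real.log (p a) ≤ 0 := fun a =>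
    mul_nonpos_of_nonneg_of_nonpos (hp0 a) (Real.log_nonpos (hp0 a) (hple a))
  -- KL(p, π K) ≥ ∑ p log p
  have hKLK : ∑ a, p a * Real.log (p a) ≤ KLdiv p (π K) := by
    unfold KLdiv
    apply Finset.sum_le_sum
    intro a _
    obtain ⟨hq0, hq1⟩ := hπpmf K le_rfl
    have hqa1 : π K a ≤ 1 := by
      rw [← hq1]; exact Finset.single_le_sum (fun b _ => hq0 b) (Finset.mem_univ a)
    rcases eq_or_lt_of_le (hq0 a) with h | h
    · rw [← h, div_zero, Real.log_zero, mul_zero]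
      exact hplogp a
    · rcases eq_or_lt_of_le (hp0 a) with hp | hp
      · rw [← hp]; simp
      · rw [Real.log_div (ne_of_gt hp) (ne_of_gt h)]
        have hlq : Real.log (π K a) ≤ 0 := Real.log_nonpos (le_of_lt h) hqa1
        nlinarith
  -- KL(p, π 0) = ∑ p log p + L
  have hKL0 : KLdiv p (π 0) = (∑ a, p a * Real.log (p a)) + L := by
    unfold KLdiv
    have key : ∀ a, p a * Real.log (p a / π 0 a)
        = p a * Real.log (p a) + p a * L := by
      intro a
      rw [hπ0 a]
      rcases eq_or_lt_of_le (hp0 a) with hp | hp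
      · rw [← hp]; ring
      · rw [Real.log_div (ne_of_gt hp) (one_div_ne_zero (ne_of_gt hcpos)),
          one_div, Real.log_inv]
        ring
    simp only [key]
    rw [Finset.sum_add_distrib, ← Finset.sum_mul, hp1, one_mul]
  -- telescoping
  have htel : KLdiv p (π K) - KLdiv p (π 0)
      ≤ -η * (∑ k ∈ Finset.range K, G k) + K * (16 * η ^ 2 * W ^ 2) := by
    rw [← Finset.sum_range_sub (fun k => KLdiv p (π k))]
    calc ∑ k ∈ Finset.range K, (KLdiv p (π (k+1)) - KLdiv p (π k))
        ≤ ∑ k ∈ Finset.range K, (-η * G k + 16 * η ^ 2 * W ^ 2) :=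
          Finset.sum_le_sum (fun k hk => hrec k (Finset.mem_range.1 hk))
      _ = _ := by
          rw [Finset.sum_add_distrib, ← Finset.mul_sum, Finset.sum_const,
            Finset.card_range, nsmul_eq_mul]
  have hmain : η * (∑ k ∈ Finset.range K, G k) ≤ L + K * (16 * η ^ 2 * W ^ 2) := by
    nlinarith [hKLK, hKL0, htel]
  have hfirst : (∑ k ∈ Finset.range K, G k) ≤ L / η + 16 * η * K * W ^ 2 := by
    rw [div_add' _ _ _ (ne_of_gt hη0), le_div_iff₀ hη0]
    nlinarith [hmain]
  refine ⟨hfirst, ?_⟩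
  -- equality part
  have hs : Real.sqrt L ^ 2 = L := Real.sq_sqrt hL.le
  have ht : Real.sqrt (K:ℝ) ^ 2 = (K:ℝ) := Real.sq_sqrt hK0.le
  have hsL : 0 < Real.sqrt L := Real.sqrt_pos.2 hL
  have htK : 0 < Real.sqrt (K:ℝ) := Real.sqrt_pos.2 hK0
  have hLK : Real.sqrt (L * K) = Real.sqrt L * Real.sqrt (K:ℝ) := Real.sqrt_mul hL.le _
  have hηeq : η = Real.sqrt L / (4 * W * Real.sqrt (K:ℝ)) := by
    rw [hη, show (16 * W ^ 2 * (K:ℝ)) = (4 * W * Real.sqrt (K:ℝ)) ^ 2 by nlinarith,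
      Real.sqrt_div hL.le, Real.sqrt_sq (by positivity)]
  have h1 : L / η = 4 * W * (Real.sqrt L * Real.sqrt (K:ℝ)) := by
    rw [hηeq, div_div_eq_mul_div, div_eq_iff (ne_of_gt hsL)]
    linear_combination (-(4 * W * Real.sqrt (K:ℝ))) * hs
  have h2 : 16 * η * K * W ^ 2 = 4 * W * (Real.sqrt L * Real.sqrt (K:ℝ)) := by
    rw [hηeq]
    field_simp
    linear_combination (-16) * ht
  rw [hLK, h1, h2]
  ring
end

section
/- Let ℱ be a class of functions bounded by W on Z, with eluder dimension dim_E(ℱ, α) for level α > 0, and let z₁,…,z_N be points with width values w_n = sup{ |f₁(z_n) − f₂(z_n)| : f₁,f₂ ∈ ℱ, ‖f₁−f₂‖²_{𝒵ⁿ} ≤ 100ε } where 𝒵ⁿ = {z₁,…,z_{n−1}}. Then the number L of indices n with w_n > α satisfies L ≤ (100ε/α² + 1)·dim_E(ℱ, α). -/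
/-- A point (given by its index `m` in the sequence `z`) is `α`-independent of the set
of points indexed by `S` with respect to the function class `ℱ`: some pair in `ℱ`
is close on `S` but differs by more than `α` at `z m`. -/
def IndepOf {Z : Type*} (ℱ : Set (Z → ℝ)) (z : ℕ → Z) (α : ℝ)
    (S : Finset ℕ) (m : ℕ) : Prop :=
  ∃ f₁ ∈ ℱ, ∃ f₂ ∈ ℱ,
    (∑ i ∈ S, (f₁ (z i) - f₂ (z i)) ^ 2) ≤ α ^ 2 ∧ α < |f₁ (z m) - f₂ (z m)|

/-- A set all of whose elements are independent of their predecessors within the set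
has cardinality at most the eluder dimension bound. -/
lemma chain_card_le {Z : Type*} (α : ℝ) (ℱ : Set (Z → ℝ)) (z : ℕ → Z) (dimE : ℕ)
    (hdim : ∀ (m : ℕ) (σ : Fin m → ℕ),
      (∀ k : Fin m,
        IndepOf ℱ z α ((Finset.univ.filter fun j : Fin m => j < k).image fun j => σ j)
          (σ k)) → m ≤ dimE)
    (S : Finset ℕ) (hS : ∀ m ∈ S, IndepOf ℱ z α (S.filter (· < m)) m) :
    S.card ≤ dimE := by
  set σ : Fin S.card → ℕ := fun k => ((S.orderIsoOfFin rfl k : {x // x ∈ S}) : ℕ) with hσ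
  apply hdim S.card σ
  intro k
  have hmem : σ k ∈ S := (S.orderIsoOfFin rfl k).2
  have himg : ((Finset.univ.filter fun j : Fin S.card => j < k).image fun j => σ j)
      = S.filter (· < σ k) := by
    ext x
    simp only [Finset.mem_image, Finset.mem_filter, Finset.mem_univ, true_and]
    constructor
    · rintro ⟨j, hj, rfl⟩
      refine ⟨(S.orderIsoOfFin rfl j).2, ?_⟩
      exact_mod_cast (S.orderIsoOfFin rfl).strictMono hj
    · rintro ⟨hxS, hxlt⟩
      refine ⟨(S.orderIsoOfFin rfl).symm ⟨x, hxS⟩, ?_, ?_⟩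
      · have := (S.orderIsoOfFin rfl).symm.strictMono
          (show (⟨x, hxS⟩ : {y // y ∈ S}) < S.orderIsoOfFin rfl k from by
            exact Subtype.mk_lt_mk.mpr hxlt)
        simpa using this
      · exact congrArg (fun t : {y // y ∈ S} => (t : ℕ))
          ((S.orderIsoOfFin rfl).apply_symm_apply ⟨x, hxS⟩)
  rw [himg]
  exact hS (σ k) hmem

/-- Pigeonhole width-counting lemma: the number of indices whose width at level
`100·ε` exceeds `α` is at most `(100ε/α² + 1)·dim_E(ℱ, α)`. -/
theorem width_counting
    {Z : Type*} (W α ε : ℝ) (hW : 0 < W) (hα : 0 < α) (hε : 0 < ε)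
    (ℱ : Set (Z → ℝ)) (hℱ : ∀ f ∈ ℱ, ∀ z, |f z| ≤ W)
    (N : ℕ) (z : ℕ → Z)
    (dimE : ℕ)
    (hdim : ∀ (m : ℕ) (σ : Fin m → ℕ),
      (∀ k : Fin m,
        IndepOf ℱ z α ((Finset.univ.filter fun j : Fin m => j < k).image fun j => σ j)
          (σ k)) → m ≤ dimE)
    (w : ℕ → ℝ)
    (hw : ∀ n, w n = sSup {d : ℝ | ∃ f₁ ∈ ℱ, ∃ f₂ ∈ ℱ,
      (∑ i ∈ Finset.range n, (f₁ (z i) - f₂ (z i)) ^ 2) ≤ 100 * ε ∧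
      d = |f₁ (z n) - f₂ (z n)|}) :
    (((Finset.range N).filter fun n => α < w n).card : ℝ) ≤
      (100 * ε / α ^ 2 + 1) * dimE := by
  set K : ℕ := Nat.floor (100 * ε / α ^ 2) with hK
  -- For every index with large width, extract a witnessing pair
  have hwit : ∀ n, α < w n → ∃ f₁ ∈ ℱ, ∃ f₂ ∈ ℱ,
      (∑ i ∈ Finset.range n, (f₁ (z i) - f₂ (z i)) ^ 2) ≤ 100 * ε ∧
      α < |f₁ (z n) - f₂ (z n)| := by
    intro n hn
    rw [hw n] at hn
    set D := {d : ℝ | ∃ f₁ ∈ ℱ, ∃ f₂ ∈ ℱ,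
      (∑ i ∈ Finset.range n, (f₁ (z i) - f₂ (z i)) ^ 2) ≤ 100 * ε ∧
      d = |f₁ (z n) - f₂ (z n)|} with hD
    have hne : D.Nonempty := by
      by_contra h
      rw [Set.not_nonempty_iff_eq_empty] at h
      rw [h, Real.sSup_empty] at hn
      linarith
    obtain ⟨d, hd, hαd⟩ := exists_lt_of_lt_csSup hne hn
    obtain ⟨f₁, hf₁, f₂, hf₂, hsum, rfl⟩ := hd
    exact ⟨f₁, hf₁, f₂, hf₂, hsum, hαd⟩
  -- Main induction: build K+1 bins of chains covering the large-width indices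
  have main : ∀ n : ℕ, ∃ B : Fin (K + 1) → Finset ℕ,
      (∀ j, ∀ i ∈ B j, i < n ∧ α < w i) ∧
      (∀ j j', j ≠ j' → Disjoint (B j) (B j')) ∧
      (∀ j, ∀ m ∈ B j, IndepOf ℱ z α ((B j).filter (· < m)) m) ∧
      ((Finset.range n).filter fun i => α < w i).card = ∑ j, (B j).card := by
    intro n
    induction n with
    | zero => exact ⟨fun _ => ∅, by simp, by simp, by simp, by simp⟩
    | succ n ih =>
      obtain ⟨B, hmem, hdisj, hchain, hcard⟩ := ih
      by_cases hn : α < w n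
      · obtain ⟨f₁, hf₁, f₂, hf₂, hsum, hgap⟩ := hwit n hn
        -- find a bin on which n's witness pair has small sum
        have hbin : ∃ j, (∑ i ∈ B j, (f₁ (z i) - f₂ (z i)) ^ 2) ≤ α ^ 2 := by
          by_contra h
          push_neg at h
          have hBsub : ∀ j, B j ⊆ Finset.range n := fun j i hi =>
            Finset.mem_range.mpr (hmem j i hi).1
          have hU : (Finset.univ.biUnion B) ⊆ Finset.range n :=
            Finset.biUnion_subset.mpr fun j _ => hBsub j
          have hsum1 : (∑ j : Fin (K + 1), ∑ i ∈ B j, (f₁ (z i) - f₂ (z i)) ^ 2)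
              = ∑ i ∈ Finset.univ.biUnion B, (f₁ (z i) - f₂ (z i)) ^ 2 := by
            rw [Finset.sum_biUnion]
            intro j _ j' _ hjj'
            exact hdisj j j' hjj'
          have hle : (∑ i ∈ Finset.univ.biUnion B, (f₁ (z i) - f₂ (z i)) ^ 2)
              ≤ ∑ i ∈ Finset.range n, (f₁ (z i) - f₂ (z i)) ^ 2 :=
            Finset.sum_le_sum_of_subset_of_nonneg hU (fun i _ _ => sq_nonneg _)
          have hlow : ((K : ℝ) + 1) * α ^ 2
              < ∑ j : Fin (K + 1), ∑ i ∈ B j, (f₁ (z i) - f₂ (z i)) ^ 2 := by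
            have h1 : (∑ _j : Fin (K + 1), α ^ 2)
                < ∑ j : Fin (K + 1), ∑ i ∈ B j, (f₁ (z i) - f₂ (z i)) ^ 2 :=
              Finset.sum_lt_sum_of_nonempty Finset.univ_nonempty (fun j _ => h j)
            have h2 : (∑ _j : Fin (K + 1), α ^ 2) = ((K : ℝ) + 1) * α ^ 2 := by
              rw [Finset.sum_const, Finset.card_univ, Fintype.card_fin, nsmul_eq_mul]
              push_cast; ring
            linarith
          have hKx : 100 * ε / α ^ 2 < (K : ℝ) + 1 := Nat.lt_floor_add_one _
          have hα2 : (0:ℝ) < α ^ 2 := by positivity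
          have h100 : 100 * ε < ((K : ℝ) + 1) * α ^ 2 := by
            have := (div_lt_iff₀ hα2).mp hKx
            linarith
          linarith
        obtain ⟨j, hj⟩ := hbin
        have hnotin : ∀ j', n ∉ B j' := fun j' hin =>
          lt_irrefl n (hmem j' n hin).1
        refine ⟨Function.update B j (insert n (B j)), ?_, ?_, ?_, ?_⟩
        · intro j' i hi
          by_cases hjj : j' = j
          · rw [hjj, Function.update_self] at hi
            rcases Finset.mem_insert.mp hi with h | hi
            · rw [h]; exact ⟨Nat.lt_succ_self n, hn⟩
            · exact ⟨Nat.lt_succ_of_lt (hmem j i hi).1, (hmem j i hi).2⟩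
          · rw [Function.update_of_ne hjj] at hi
            exact ⟨Nat.lt_succ_of_lt (hmem j' i hi).1, (hmem j' i hi).2⟩
        · intro a b hab
          by_cases ha : a = j <;> by_cases hb : b = j
          · exact absurd (ha.trans hb.symm) hab
          · rw [ha, Function.update_self, Function.update_of_ne hb]
            exact Finset.disjoint_insert_left.mpr ⟨hnotin b, hdisj j b (ha ▸ hab)⟩
          · rw [hb, Function.update_self, Function.update_of_ne ha]
            exact Finset.disjoint_insert_right.mpr ⟨hnotin a, hdisj a j (hb ▸ hab)⟩
          · rw [Function.update_of_ne ha, Function.update_of_ne hb]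
            exact hdisj a b hab
        · intro j' m hm
          by_cases hjj : j' = j
          · rw [hjj, Function.update_self] at hm ⊢
            rcases Finset.mem_insert.mp hm with h | hm
            · subst h
              have hfil : (insert m (B j)).filter (· < m) = B j := by
                ext i
                simp only [Finset.mem_filter, Finset.mem_insert]
                constructor
                · rintro ⟨heq | hi, hlt⟩
                  · exact absurd hlt (by omega)
                  · exact hi
                · intro hi
                  exact ⟨Or.inr hi, (hmem j i hi).1⟩
              rw [hfil]
              exact ⟨f₁, hf₁, f₂, hf₂, hj, hgap⟩
            · have hfil : (insert n (B j)).filter (· < m) = (B j).filter (· < m) := by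
                ext i
                simp only [Finset.mem_filter, Finset.mem_insert]
                constructor
                · rintro ⟨heq | hi, hlt⟩
                  · exact absurd ((hmem j m hm).1) (by omega)
                  · exact ⟨hi, hlt⟩
                · rintro ⟨hi, hlt⟩
                  exact ⟨Or.inr hi, hlt⟩
              rw [hfil]
              exact hchain j m hm
          · rw [Function.update_of_ne hjj] at hm ⊢
            exact hchain j' m hm
        · rw [Finset.range_add_one, Finset.filter_insert, if_pos hn,
            Finset.card_insert_of_notMem (by simp), hcard]
          have hpt : ∀ j₁ : Fin (K + 1),
              (Function.update B j (insert n (B j)) j₁).card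
                = (B j₁).card + if j₁ = j then 1 else 0 := by
            intro j₁
            rcases eq_or_ne j₁ j with rfl | h
            · simp [Finset.card_insert_of_notMem (hnotin _)]
            · simp [Function.update_of_ne h, h]
          simp only [hpt, Finset.sum_add_distrib, Finset.sum_ite_eq', Finset.mem_univ,
            if_true]
      · refine ⟨B, ?_, hdisj, hchain, ?_⟩
        · intro j i hi
          exact ⟨Nat.lt_succ_of_lt (hmem j i hi).1, (hmem j i hi).2⟩
        · rw [Finset.range_add_one, Finset.filter_insert, if_neg hn, hcard]
  obtain ⟨B, hmem, hdisj, hchain, hcard⟩ := main N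
  have hbound : ∀ j, (B j).card ≤ dimE := fun j =>
    chain_card_le α ℱ z dimE hdim (B j) (hchain j)
  have hnat : ((Finset.range N).filter fun n => α < w n).card ≤ (K + 1) * dimE := by
    rw [hcard]
    calc ∑ j, (B j).card ≤ ∑ _j : Fin (K + 1), dimE := Finset.sum_le_sum fun j _ => hbound j
    _ = (K + 1) * dimE := by simp [Finset.sum_const, mul_comm]
  have hKle : (K : ℝ) ≤ 100 * ε / α ^ 2 := Nat.floor_le (by positivity)
  calc (((Finset.range N).filter fun n => α < w n).card : ℝ)
      ≤ ((K + 1) * dimE : ℕ) := by exact_mod_cast hnat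
    _ = ((K : ℝ) + 1) * dimE := by push_cast; ring
    _ ≤ (100 * ε / α ^ 2 + 1) * dimE := by
        apply mul_le_mul_of_nonneg_right (by linarith) (Nat.cast_nonneg _)
end
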